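/- For every integer n ≥ 4, the graph I_{⌊(n−1)/2⌋}(W_n), where ⌊(n−1)/2⌋ is the independence number of the wheel W_n on n vertices, is not Hamiltonian. -/

import Mathlib

/-- A finset of vertices is independent if no two of its members are adjacent. -/
def IsIndep {V : Type*} (G : SimpleGraph V) (s : Finset V) : Prop :=
  ∀ u ∈ s, ∀ v ∈ s, ¬ G.Adj u v

/-- The `k`-independent graph of `G`: vertices are the independent sets of cardinality at most
`k`, two of them adjacent iff one is obtained from the other by adding a single vertex. -/
def indepGraph {V : Type*} (G : SimpleGraph V) (k : ℕ) :
    SimpleGraph {s : Finset V // IsIndep G s ∧ s.card ≤ k} where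
  Adj A B := (A.1 ⊆ B.1 ∧ B.1.card = A.1.card + 1) ∨ (B.1 ⊆ A.1 ∧ A.1.card = B.1.card + 1)
  symm := by
    constructor
    rintro A B (⟨h1, h2⟩ | ⟨h1, h2⟩)
    · exact Or.inr ⟨h1, h2⟩
    · exact Or.inl ⟨h1, h2⟩
  loopless := by
    constructor
    rintro A (⟨_, h⟩ | ⟨_, h⟩) <;> omega

noncomputable instance {V : Type*} [Fintype V] (G : SimpleGraph V) (k : ℕ) :
    Fintype {s : Finset V // IsIndep G s ∧ s.card ≤ k} :=
  Fintype.ofFinite _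

/-- The wheel graph with one hub vertex (`none`) joined to every vertex of a cycle on `m`
vertices; it has `m + 1` vertices in total. -/
def wheelGraph (m : ℕ) : SimpleGraph (Option (Fin m)) where
  Adj a b := a ≠ b ∧ (a = none ∨ b = none ∨
    ∃ i j, a = some i ∧ b = some j ∧ (SimpleGraph.cycleGraph m).Adj i j)
  symm := by
    constructor
    rintro a b ⟨hne, h⟩
    refine ⟨hne.symm, ?_⟩
    rcases h with h | h | ⟨i, j, hi, hj, hadj⟩
    · exact Or.inr (Or.inl h)
    · exact Or.inl h
    · exact Or.inr (Or.inr ⟨j, i, hj, hi, hadj.symm⟩)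
  loopless := by
    constructor
    rintro a ⟨hne, _⟩
    exact hne rfl

/-!
The hub `h` of a wheel is adjacent to every other vertex, so no independent set contains `h`
together with another vertex. Hence the vertex `{h}` of the `k`-independent graph has `∅` as its
only neighbour, while every vertex of a Hamiltonian graph with at least two vertices has two
distinct neighbours on a Hamiltonian cycle.
-/

namespace SimpleGraph

lemma IsHamiltonian.neighborSet_nontrivial {α : Type*} [Fintype α] [DecidableEq α]
    [Nontrivial α] {G : SimpleGraph α} (hG : G.IsHamiltonian) (v : α) :
    (G.neighborSet v).Nontrivial := by
  obtain ⟨p, hp⟩ := hG.exists_isHamiltonianCycle v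
  have hnil : ¬ p.Nil := hp.isCycle.not_nil
  exact ⟨p.snd, p.adj_snd hnil, p.penultimate, (p.adj_penultimate hnil).symm,
    hp.isCycle.snd_ne_penultimate⟩

end SimpleGraph

section IndepGraph

variable {V : Type*} {G : SimpleGraph V} {k : ℕ}

lemma isIndep_empty (G : SimpleGraph V) : IsIndep G ∅ := by
  simp [IsIndep]

lemma isIndep_singleton (G : SimpleGraph V) (v : V) : IsIndep G {v} := by
  simp [IsIndep]

lemma indepGraph_adj_empty_of_card_eq_one {A : {s : Finset V // IsIndep G s ∧ s.card ≤ k}}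
    (hA : A.1.card = 1) : (indepGraph G k).Adj A ⟨∅, isIndep_empty G, Nat.zero_le k⟩ :=
  Or.inr ⟨Finset.empty_subset _, hA⟩

lemma eq_empty_of_indepGraph_adj_singleton {v : V} (hv : ∀ w ≠ v, G.Adj v w)
    {A B : {s : Finset V // IsIndep G s ∧ s.card ≤ k}} (hA : A.1 = {v})
    (hAB : (indepGraph G k).Adj A B) : B.1 = ∅ := by
  rcases hAB with ⟨hsub, hcard⟩ | ⟨_, hcard⟩
  · rw [hA, Finset.card_singleton] at hcard
    obtain ⟨w, hw, hwv⟩ := Finset.exists_mem_ne (by omega : 1 < B.1.card) v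
    exact absurd (hv w hwv) (B.2.1 v (hsub (by simp [hA])) w hw)
  · rw [hA, Finset.card_singleton] at hcard
    exact Finset.card_eq_zero.mp (by omega)

lemma indepGraph_neighborSet_subsingleton_of_forall_adj {v : V} (hv : ∀ w ≠ v, G.Adj v w)
    {A : {s : Finset V // IsIndep G s ∧ s.card ≤ k}} (hA : A.1 = {v}) :
    ((indepGraph G k).neighborSet A).Subsingleton := fun _ hB _ hC =>
  Subtype.ext <| (eq_empty_of_indepGraph_adj_singleton hv hA hB).trans
    (eq_empty_of_indepGraph_adj_singleton hv hA hC).symm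

end IndepGraph

lemma wheelGraph_adj_none {m : ℕ} (w : Option (Fin m)) (hw : w ≠ none) :
    (wheelGraph m).Adj none w :=
  ⟨hw.symm, Or.inl rfl⟩

theorem indepGraph_wheel_not_hamiltonian (n : ℕ) (hn : 4 ≤ n) :
    ¬ (indepGraph (wheelGraph (n - 1)) ((n - 1) / 2)).IsHamiltonian := by
  intro hG
  let hub : {s : Finset (Option (Fin (n - 1))) //
      IsIndep (wheelGraph (n - 1)) s ∧ s.card ≤ (n - 1) / 2} :=
    ⟨{none}, isIndep_singleton _ none, by rw [Finset.card_singleton]; omega⟩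
  have hub_adj_empty : (indepGraph _ _).Adj hub _ :=
    indepGraph_adj_empty_of_card_eq_one (Finset.card_singleton none)
  have : Nontrivial _ := ⟨_, _, hub_adj_empty.ne⟩
  exact (hG.neighborSet_nontrivial hub).not_subsingleton
    (indepGraph_neighborSet_subsingleton_of_forall_adj wheelGraph_adj_none rfl)
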